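/- arXiv:2310.20612 — 4 statements merged into one kernel-verified Lean document; each statement's English description precedes it below -/
import Mathlib

section
/- Let Ω ⊂ ℝⁿ be a bounded open convex set, a ∈ Ω, and let u_a : cl(Ω) → ℝ be the 'cone' function defined by u_a((1−θ)y + θa) = −θ for every y ∈ ∂Ω and θ ∈ [0,1]. Then the subgradient image of Ω under u_a equals the subgradient of u_a at the point a, i.e. ∂u_a(Ω) = ∂u_a(a). -/
open scoped RealInnerProductSpace

/-- The subgradient of `u : Ω → ℝ` at `x`. -/
def subgrad {n : ℕ} (Ω : Set (EuclideanSpace ℝ (Fin n)))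
    (u : EuclideanSpace ℝ (Fin n) → ℝ) (x : EuclideanSpace ℝ (Fin n)) :
    Set (EuclideanSpace ℝ (Fin n)) :=
  {p | ∀ z ∈ Ω, u x + ⟪p, z - x⟫ ≤ u z}

/-- For the cone function `u_a` on a bounded open convex set `Ω`
(vanishing on `∂Ω`, equal to `-1` at `a`, affine on segments from `∂Ω` to `a`),
the subgradient image of `Ω` equals the subgradient at the vertex `a`. -/
theorem stmt1 {n : ℕ} (Ω : Set (EuclideanSpace ℝ (Fin n)))
    (hΩo : IsOpen Ω) (hΩc : Convex ℝ Ω) (hΩb : Bornology.IsBounded Ω)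
    (a : EuclideanSpace ℝ (Fin n)) (ha : a ∈ Ω)
    (u : EuclideanSpace ℝ (Fin n) → ℝ)
    (hconv : ConvexOn ℝ (closure Ω) u)
    (hcone : ∀ y ∈ frontier Ω, ∀ θ ∈ Set.Icc (0:ℝ) 1,
      u ((1 - θ) • y + θ • a) = -θ) :
    (⋃ x ∈ Ω, subgrad Ω u x) = subgrad Ω u a := by
  apply Set.Subset.antisymm
  · intro p hp
    simp only [Set.mem_iUnion] at hp
    obtain ⟨x, hx, hp⟩ := hp
    by_cases hxa : x = a
    · subst hxa; exact hp
    -- the direction from a to x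
    set d : EuclideanSpace ℝ (Fin n) := x - a with hd_def
    have hd : d ≠ 0 := sub_ne_zero.mpr hxa
    have hdn : (0:ℝ) < ‖d‖ := norm_pos_iff.mpr hd
    set S : Set ℝ := {t : ℝ | a + t • d ∈ closure Ω} with hS_def
    have hg : Continuous fun t : ℝ => a + t • d :=
      continuous_const.add (continuous_id.smul continuous_const)
    have hScl : IsClosed S := isClosed_closure.preimage hg
    have hSne : S.Nonempty := ⟨1, by simp [hS_def, hd_def, subset_closure hx]⟩
    obtain ⟨R, hR⟩ := hΩb.closure.subset_closedBall a
    have hSbdd : BddAbove S := by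
      refine ⟨R / ‖d‖, fun t ht => ?_⟩
      have h1 : a + t • d ∈ Metric.closedBall a R := hR ht
      rw [Metric.mem_closedBall, dist_eq_norm] at h1
      simp only [add_sub_cancel_left, norm_smul, Real.norm_eq_abs] at h1
      rw [le_div_iff₀ hdn]
      calc t * ‖d‖ ≤ |t| * ‖d‖ := by
            exact mul_le_mul_of_nonneg_right (le_abs_self t) hdn.le
        _ ≤ R := h1
    set T : ℝ := sSup S with hT_def
    have hTS : T ∈ S := hScl.csSup_mem hSne hSbdd
    have hT1 : (1:ℝ) ≤ T := le_csSup hSbdd (by simp [hS_def, hd_def, subset_closure hx])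
    -- the frontier point
    have hynΩ' : a + T • d ∉ Ω := by
      intro hyΩ
      obtain ⟨ε, hε, hball⟩ := Metric.isOpen_iff.mp (hΩo.preimage hg) T hyΩ
      have : T + ε / 2 ∈ S := by
        refine subset_closure (hball ?_)
        simp [Real.dist_eq, abs_of_pos, hε, half_lt_self hε]
      have := le_csSup hSbdd this
      linarith
    clear_value T
    set y : EuclideanSpace ℝ (Fin n) := a + T • d with hy_def
    have hynΩ : y ∉ Ω := hynΩ'
    clear_value y
    have hyc : y ∈ closure Ω := by rw [hy_def]; exact hTS
    have hyfr : y ∈ frontier Ω := by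
      rw [frontier, hΩo.interior_eq]
      exact ⟨hyc, hynΩ⟩
    have hTgt1 : (1:ℝ) < T := by
      rcases lt_or_eq_of_le hT1 with h | h
      · exact h
      · exfalso; apply hynΩ; rw [hy_def, ← h, one_smul, hd_def]
        simpa using hx
    have hT0 : T ≠ 0 := by positivity
    obtain ⟨θ, hθ_def⟩ : ∃ θ : ℝ, θ = 1 - 1 / T := ⟨_, rfl⟩
    have hθpos : 0 < θ := by
      rw [hθ_def]; rw [sub_pos]
      rw [div_lt_one (by linarith)]; linarith
    have hθlt1 : θ < 1 := by
      rw [hθ_def]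
      have : 0 < 1 / T := by positivity
      linarith
    have hxy : (1 - θ) • y + θ • a = x := by
      rw [hθ_def, hy_def]
      have hxd : x = a + d := by rw [hd_def]; abel
      rw [hxd]
      match_scalars <;> field_simp <;> ring
    -- values of u
    have hua : u a = -1 := by
      have h := hcone y hyfr 1 ⟨by norm_num, le_refl 1⟩
      simpa using h
    have hux : u x = -θ := by
      have h := hcone y hyfr θ ⟨hθpos.le, hθlt1.le⟩
      rwa [hxy] at h
    -- the midpoint test
    obtain ⟨z, hz_def⟩ : ∃ z, z = (1 - θ / 2) • y + (θ / 2) • a := ⟨_, rfl⟩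
    have hzΩ : z ∈ Ω := by
      have h := hΩc.combo_interior_closure_mem_interior
        (by rw [hΩo.interior_eq]; exact ha) (frontier_subset_closure hyfr)
        (show (0:ℝ) < θ / 2 by linarith) (show (0:ℝ) ≤ 1 - θ / 2 by linarith)
        (by ring)
      rw [hΩo.interior_eq] at h
      rw [hz_def, add_comm]
      exact h
    have huz : u z = -(θ / 2) := by
      rw [hz_def]
      exact hcone y hyfr (θ / 2) ⟨by linarith, by linarith⟩
    have hzx : z - x = (θ / 2) • (y - a) := by
      rw [hz_def, ← hxy]; module
    have hkey : ⟪p, y - a⟫ ≤ 1 := by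
      have h1 := hp z hzΩ
      rw [hzx, real_inner_smul_right, hux, huz] at h1
      nlinarith
    -- inner with d
    have hya : y - a = T • d := by rw [hy_def]; abel
    have hpd : ⟪p, d⟫ ≤ 1 / T := by
      rw [hya, real_inner_smul_right] at hkey
      rw [le_div_iff₀ (by linarith : (0:ℝ) < T)]
      nlinarith [hkey]
    -- conclude
    intro z' hz'
    have h2 := hp z' hz'
    have hsplit : z' - a = (z' - x) + d := by rw [hd_def]; abel
    rw [hsplit, inner_add_right]
    rw [hux] at h2
    have : -(1:ℝ) + ⟪p, d⟫ ≤ -θ := by rw [hθ_def]; linarith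
    rw [hua]
    linarith
  · intro p hp
    exact Set.mem_biUnion ha hp
end

section
/- Let Ω ⊂ ℝⁿ be a bounded open convex set, a ∈ Ω, and M : ℝⁿ → ℝⁿ an invertible linear map. Then f_{MΩ}(Ma) = |det M|⁻¹ · f_Ω(a), where f_Ω(a) denotes the Lebesgue measure of the subgradient image ∂u_{Ω,a}(Ω) of the cone function with vertex a. -/
open scoped RealInnerProductSpace
open MeasureTheory

/-- Every point of a bounded open convex set with nonempty frontier lies on a segment
from a frontier point to `a`. -/
lemma ray_to_frontier {n : ℕ} {Ω : Set (EuclideanSpace ℝ (Fin n))}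
    (hΩo : IsOpen Ω) (hΩb : Bornology.IsBounded Ω)
    {a : EuclideanSpace ℝ (Fin n)} (ha : a ∈ Ω)
    (hfr : (frontier Ω).Nonempty)
    {x : EuclideanSpace ℝ (Fin n)} (hx : x ∈ Ω) :
    ∃ y ∈ frontier Ω, ∃ θ ∈ Set.Icc (0:ℝ) 1, x = (1 - θ) • y + θ • a := by
  rcases eq_or_ne x a with rfl | hxa
  · obtain ⟨y₀, hy₀⟩ := hfr
    exact ⟨y₀, hy₀, 1, ⟨zero_le_one, le_refl 1⟩, by simp⟩
  · set f : ℝ → EuclideanSpace ℝ (Fin n) := fun t => a + t • (x - a) with hf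
    have hfc : Continuous f := by fun_prop
    set S : Set ℝ := {t | 0 ≤ t ∧ f t ∈ closure Ω} with hS
    have h1S : (1 : ℝ) ∈ S := by
      constructor
      · norm_num
      · have : f 1 = x := by simp [hf]
        rw [this]; exact subset_closure hx
    have hSne : S.Nonempty := ⟨1, h1S⟩
    have hSbdd : BddAbove S := by
      obtain ⟨C, hC⟩ := isBounded_iff_forall_norm_le.1 hΩb.closure
      have hxa' : (0:ℝ) < ‖x - a‖ := by
        rw [norm_pos_iff]; exact sub_ne_zero.2 hxa
      refine ⟨(C + ‖a‖) / ‖x - a‖, fun t ht => ?_⟩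
      have h1 : ‖f t‖ ≤ C := hC _ ht.2
      have h2 : t * ‖x - a‖ = ‖f t - a‖ := by
        simp [hf, norm_smul, abs_of_nonneg ht.1]
      have h3 : ‖f t - a‖ ≤ C + ‖a‖ := by
        calc ‖f t - a‖ ≤ ‖f t‖ + ‖a‖ := norm_sub_le _ _
        _ ≤ C + ‖a‖ := by linarith
      rw [le_div_iff₀ hxa']
      linarith [h2 ▸ h3]
    have hScl : IsClosed S := by
      have : S = Set.Ici (0:ℝ) ∩ f ⁻¹' (closure Ω) := rfl
      rw [this]
      exact isClosed_Ici.inter (isClosed_closure.preimage hfc)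
    set T := sSup S with hT
    have hTS : T ∈ S := hScl.csSup_mem hSne hSbdd
    have hT1 : (1:ℝ) ≤ T := le_csSup hSbdd h1S
    have hT0 : T ≠ 0 := by linarith
    have hfT : f T ∉ Ω := by
      intro hmem
      have : f ⁻¹' Ω ∈ nhds T := hfc.continuousAt.preimage_mem_nhds (hΩo.mem_nhds hmem)
      obtain ⟨δ, hδ, hball⟩ := Metric.mem_nhds_iff.1 this
      have hTδ : T + δ/2 ∈ S := by
        constructor
        · linarith
        · have hmem2 : T + δ/2 ∈ Metric.ball T δ := by
            rw [Metric.mem_ball, Real.dist_eq, add_sub_cancel_left,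
              abs_of_pos (by linarith : (0:ℝ) < δ/2)]
            linarith
          exact subset_closure (hball hmem2)
      have := le_csSup hSbdd hTδ
      linarith
    have hyfr : f T ∈ frontier Ω := by
      rw [frontier, hΩo.interior_eq]
      exact ⟨hTS.2, hfT⟩
    have hT01 : (0:ℝ) < T := by linarith
    have ha1 : 1/T ≤ 1 := by rw [div_le_one hT01]; exact hT1
    have ha0 : (0:ℝ) < 1/T := by positivity
    refine ⟨f T, hyfr, 1 - 1/T, ⟨by linarith, by linarith⟩, ?_⟩
    have h1T : (1 - (1 - 1/T)) = 1/T := by ring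
    rw [h1T, hf]
    simp only
    rw [smul_add, smul_smul, one_div, inv_mul_cancel₀ hT0, one_smul]
    module

/-- For an invertible linear map `M` and the cone functions
`u = u_{Ω,a}` and `v = u_{MΩ,Ma}`, one has `f_{MΩ}(Ma) = |det M|⁻¹ f_Ω(a)`. -/
theorem stmt4 {n : ℕ} (Ω : Set (EuclideanSpace ℝ (Fin n)))
    (hΩo : IsOpen Ω) (hΩc : Convex ℝ Ω) (hΩb : Bornology.IsBounded Ω)
    (a : EuclideanSpace ℝ (Fin n)) (ha : a ∈ Ω)
    (M : EuclideanSpace ℝ (Fin n) ≃ₗ[ℝ] EuclideanSpace ℝ (Fin n))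
    (u v : EuclideanSpace ℝ (Fin n) → ℝ)
    (hcone : ∀ y ∈ frontier Ω, ∀ θ ∈ Set.Icc (0:ℝ) 1,
      u ((1 - θ) • y + θ • a) = -θ)
    (hcone' : ∀ y ∈ frontier (⇑M '' Ω), ∀ θ ∈ Set.Icc (0:ℝ) 1,
      v ((1 - θ) • y + θ • (M a)) = -θ) :
    volume (⋃ x ∈ (⇑M '' Ω), subgrad (⇑M '' Ω) v x)
      = ENNReal.ofReal |LinearMap.det (M : EuclideanSpace ℝ (Fin n) →ₗ[ℝ] EuclideanSpace ℝ (Fin n))|⁻¹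
        * volume (⋃ x ∈ Ω, subgrad Ω u x) := by
  classical
  by_cases hfr : (frontier Ω).Nonempty
  · -- main case
    obtain ⟨y₀, hy₀⟩ := hfr
    have hMfr : ∀ y ∈ frontier Ω, M y ∈ frontier (⇑M '' Ω) := by
      intro y hy
      have h := (M.toContinuousLinearEquiv.toHomeomorph.image_frontier Ω)
      have hcoe : ⇑M.toContinuousLinearEquiv.toHomeomorph = ⇑M := rfl
      rw [hcoe] at h
      rw [← h]
      exact ⟨y, hy, rfl⟩
    have huv : ∀ x ∈ Ω, v (M x) = u x := by
      intro x hx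
      obtain ⟨y, hy, θ, hθ, hxe⟩ := ray_to_frontier hΩo hΩb ha ⟨y₀, hy₀⟩ hx
      have hux : u x = -θ := by rw [hxe]; exact hcone y hy θ hθ
      have hMx : M x = (1 - θ) • (M y) + θ • (M a) := by
        rw [hxe]; simp [map_add, _root_.map_smul]
      rw [hMx, hux]
      exact hcone' (M y) (hMfr y hy) θ hθ
    set A := LinearMap.adjoint
      (M : EuclideanSpace ℝ (Fin n) →ₗ[ℝ] EuclideanSpace ℝ (Fin n)) with hA
    have hsub : ∀ x ∈ Ω, subgrad (⇑M '' Ω) v (M x) = A ⁻¹' (subgrad Ω u x) := by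
      intro x hx
      have hinner : ∀ (p w : EuclideanSpace ℝ (Fin n)),
          ⟪p, M w - M x⟫ = ⟪A p, w - x⟫ := by
        intro p w
        rw [← map_sub M w x]
        exact (LinearMap.adjoint_inner_left
          (M : EuclideanSpace ℝ (Fin n) →ₗ[ℝ] EuclideanSpace ℝ (Fin n)) (w - x) p).symm
      ext p
      simp only [subgrad, Set.mem_setOf_eq, Set.mem_preimage]
      rw [Set.forall_mem_image]
      constructor
      · intro h w hw
        have := h hw
        rw [huv x hx, huv w hw, hinner p w] at this
        exact this
      · intro h w hw
        have := h w hw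
        rw [huv x hx, huv w hw, hinner p w]
        exact this
    have hunion : (⋃ x ∈ (⇑M '' Ω), subgrad (⇑M '' Ω) v x)
        = A ⁻¹' (⋃ x ∈ Ω, subgrad Ω u x) := by
      rw [Set.biUnion_image, Set.preimage_iUnion₂]
      exact Set.iUnion₂_congr hsub
    have hdet : LinearMap.det A
        = LinearMap.det (M : EuclideanSpace ℝ (Fin n) →ₗ[ℝ] EuclideanSpace ℝ (Fin n)) := by
      let b := EuclideanSpace.basisFun (Fin n) ℝ
      rw [← LinearMap.det_toMatrix b.toBasis, ← LinearMap.det_toMatrix b.toBasis,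
        hA, LinearMap.toMatrix_adjoint, Matrix.det_conjTranspose]
      exact star_trivial _
    have hdetM : LinearMap.det
        (M : EuclideanSpace ℝ (Fin n) →ₗ[ℝ] EuclideanSpace ℝ (Fin n)) ≠ 0 :=
      (LinearEquiv.isUnit_det' M).ne_zero
    have hdetA : LinearMap.det A ≠ 0 := by rw [hdet]; exact hdetM
    rw [hunion, Measure.addHaar_preimage_linearMap volume hdetA, hdet, abs_inv]
  · -- frontier empty: the space is a single point
    have hfre : frontier Ω = ∅ := Set.not_nonempty_iff_eq_empty.1 hfr
    have hclopen : IsClopen Ω := isClopen_iff_frontier_eq_empty.2 hfre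
    have hΩuniv : Ω = Set.univ := hclopen.eq_univ ⟨a, ha⟩
    have hbdd : Bornology.IsBounded (Set.univ : Set (EuclideanSpace ℝ (Fin n))) :=
      hΩuniv ▸ hΩb
    have hsub : Subsingleton (EuclideanSpace ℝ (Fin n)) := by
      obtain ⟨C, hC⟩ := isBounded_iff_forall_norm_le.1 hbdd
      refine ⟨fun z w => ?_⟩
      have hz : ∀ y : EuclideanSpace ℝ (Fin n), y = 0 := by
        intro y
        by_contra hy
        have hy' : (0:ℝ) < ‖y‖ := norm_pos_iff.2 hy
        have := hC ((((C:ℝ) + 1)/‖y‖) • y) (Set.mem_univ _)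
        rw [norm_smul] at this
        have hC0 : (0:ℝ) ≤ C :=
          le_trans (norm_nonneg (0:EuclideanSpace ℝ (Fin n))) (hC 0 (Set.mem_univ _))
        have habs : |((C:ℝ) + 1)/‖y‖| = (C + 1)/‖y‖ := abs_of_nonneg (by positivity)
        rw [Real.norm_eq_abs, habs, div_mul_cancel₀ _ (ne_of_gt hy')] at this
        linarith
      rw [hz z, hz w]
    have hMΩ : ⇑M '' Ω = Ω := by
      rw [hΩuniv, Set.image_univ]
      exact M.surjective.range_eq
    have hsubgrad : ∀ (w : EuclideanSpace ℝ (Fin n) → ℝ) (x : EuclideanSpace ℝ (Fin n)),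
        x ∈ Ω → subgrad Ω w x = Set.univ := by
      intro w x hx
      ext p
      simp only [subgrad, Set.mem_setOf_eq, Set.mem_univ, iff_true]
      intro z hz
      have : z = x := Subsingleton.elim _ _
      rw [this, sub_self, inner_zero_right, add_zero]
    have hV : ∀ (w : EuclideanSpace ℝ (Fin n) → ℝ),
        (⋃ x ∈ Ω, subgrad Ω w x) = Set.univ := by
      intro w
      apply Set.eq_univ_of_univ_subset
      intro p _
      exact Set.mem_biUnion ha ((hsubgrad w a ha).symm ▸ Set.mem_univ p)
    have hdet1 : LinearMap.det
        (M : EuclideanSpace ℝ (Fin n) →ₗ[ℝ] EuclideanSpace ℝ (Fin n)) = 1 :=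
      LinearMap.det_eq_one_of_subsingleton _
    rw [hMΩ, hV v, hV u, hdet1]
    norm_num
end

section
/- Let Ω ⊂ ℝⁿ be a bounded open convex set, a ∈ Ω. Then f_Ω(a) = |(Ω − a)°|, i.e. the Lebesgue measure of the subgradient image of the cone function with vertex a equals the Lebesgue measure of the polar of the translated set Ω − a. -/
open scoped RealInnerProductSpace
open MeasureTheory

/-- The polar of a set `S ⊆ ℝⁿ`. -/
def realPolar {n : ℕ} (S : Set (EuclideanSpace ℝ (Fin n))) :
    Set (EuclideanSpace ℝ (Fin n)) :=
  {y | ∀ x ∈ S, ⟪x, y⟫ ≤ 1}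

/-- For the cone function `u = u_{Ω,a}` on a bounded open
convex set `Ω` with `a ∈ Ω`, `f_Ω(a) = |∂u(Ω)| = |(Ω - a)°|`. -/
theorem stmt5 {n : ℕ} (Ω : Set (EuclideanSpace ℝ (Fin n)))
    (hΩo : IsOpen Ω) (hΩc : Convex ℝ Ω) (hΩb : Bornology.IsBounded Ω)
    (a : EuclideanSpace ℝ (Fin n)) (ha : a ∈ Ω)
    (u : EuclideanSpace ℝ (Fin n) → ℝ)
    (hcone : ∀ y ∈ frontier Ω, ∀ θ ∈ Set.Icc (0:ℝ) 1,
      u ((1 - θ) • y + θ • a) = -θ) :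
    volume (⋃ x ∈ Ω, subgrad Ω u x)
      = volume (realPolar ((fun x => x - a) '' Ω)) := by
  set K : Set (EuclideanSpace ℝ (Fin n)) := (fun x => x - a) '' Ω with hK
  suffices hset : (⋃ x ∈ Ω, subgrad Ω u x) = realPolar K by rw [hset]
  rcases subsingleton_or_nontrivial (EuclideanSpace ℝ (Fin n)) with hsub | hnt
  · -- subsingleton case : both sides are `univ`
    have h1 : realPolar K = Set.univ := by
      apply Set.eq_univ_of_forall
      intro p
      simp only [realPolar, Set.mem_setOf_eq]
      intro v hv
      obtain ⟨z, _, rfl⟩ := hv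
      have hz0 : z - a = 0 := by rw [Subsingleton.elim z a, sub_self]
      show ⟪z - a, p⟫ ≤ 1
      rw [hz0, inner_zero_left]; norm_num
    have h2 : (⋃ x ∈ Ω, subgrad Ω u x) = Set.univ := by
      apply Set.eq_univ_of_forall
      intro p
      refine Set.mem_iUnion₂.2 ⟨a, ha, ?_⟩
      intro z hz
      have hz' : z = a := Subsingleton.elim z a
      subst hz'
      simp [subgrad] at *
    rw [h1, h2]
  · -- main case
    have h0K : (0 : EuclideanSpace ℝ (Fin n)) ∈ K := ⟨a, ha, sub_self a⟩
    have homeo : ∀ s : Set (EuclideanSpace ℝ (Fin n)), (fun x => x - a) '' s = (Homeomorph.subRight a) '' s := by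
      intro s; rfl
    have hKo : IsOpen K := by
      rw [hK, homeo, Homeomorph.isOpen_image]; exact hΩo
    have hKnhds : K ∈ nhds (0 : EuclideanSpace ℝ (Fin n)) := hKo.mem_nhds h0K
    have habs : Absorbent ℝ K := absorbent_nhds_zero hKnhds
    have hKc : Convex ℝ K := by
      have : K = (fun x => -a + x) '' Ω := by
        rw [hK]; apply Set.image_congr; intro x _; rw [sub_eq_neg_add]
      rw [this]; exact hΩc.translate (-a)
    have hKb : Bornology.IsVonNBounded ℝ K := by
      apply NormedSpace.isVonNBounded_of_isBounded
      rw [hK, ← Set.sub_singleton]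
      exact hΩb.sub Bornology.isBounded_singleton
    have hmemK : ∀ z ∈ Ω, z - a ∈ K := fun z hz => ⟨z, hz, rfl⟩
    -- frontier characterization
    have hfrontK : frontier K = (fun x : EuclideanSpace ℝ (Fin n) => x - a) '' frontier Ω := by
      rw [hK, homeo, ← Homeomorph.image_frontier]
      exact (homeo _).symm
    have hfront : ∀ w : EuclideanSpace ℝ (Fin n), gauge K w = 1 → w + a ∈ frontier Ω := by
      intro w hw
      have : w ∈ frontier K := (gauge_eq_one_iff_mem_frontier hKc hKnhds).1 hw
      rw [hfrontK] at this
      obtain ⟨y, hy, hy'⟩ := this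
      have : y = w + a := by rw [← hy']; simp
      rwa [← this]
    -- u a = -1
    obtain ⟨v, hv⟩ := exists_ne (0 : EuclideanSpace ℝ (Fin n))
    have hua : u a = -1 := by
      have hgv : 0 < gauge K v := gauge_pos habs hKb |>.2 hv
      have h1 : gauge K ((gauge K v)⁻¹ • v) = 1 := by
        rw [gauge_smul_of_nonneg (inv_nonneg.2 hgv.le), smul_eq_mul,
          inv_mul_cancel₀ hgv.ne']
      have hy := hfront _ h1
      have := hcone _ hy 1 (by norm_num)
      simpa using this
    -- the key formula : u z = gauge K (z - a) - 1 on Ω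
    have hA : ∀ z ∈ Ω, u z = gauge K (z - a) - 1 := by
      intro z hz
      by_cases hza : z = a
      · subst hza; rw [sub_self, gauge_zero, hua]; ring
      · have hw : z - a ≠ 0 := sub_ne_zero.2 hza
        set r := gauge K (z - a) with hr
        have hrpos : 0 < r := gauge_pos habs hKb |>.2 hw
        have hrlt : r < 1 := gauge_lt_one_of_mem_of_isOpen hKo (hmemK z hz)
        have h1 : gauge K (r⁻¹ • (z - a)) = 1 := by
          rw [gauge_smul_of_nonneg (inv_nonneg.2 hrpos.le), smul_eq_mul, ← hr,
            inv_mul_cancel₀ hrpos.ne']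
        have hy := hfront _ h1
        have hmem : (1 - r) ∈ Set.Icc (0:ℝ) 1 := ⟨by linarith, by linarith⟩
        have := hcone _ hy (1 - r) hmem
        have harg : (1 - (1 - r)) • (r⁻¹ • (z - a) + a) + (1 - r) • a = z := by
          rw [show (1 - (1 - r)) = r by ring, smul_add, smul_smul,
            mul_inv_cancel₀ hrpos.ne', one_smul]
          rw [add_assoc, ← add_smul, show r + (1 - r) = (1:ℝ) by ring, one_smul]
          abel
        rw [harg] at this
        rw [this]; ring
    -- set equality
    ext p
    simp only [Set.mem_iUnion₂]
    constructor
    · rintro ⟨x, hx, hp⟩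
      intro v hvK
      have hvK' : v ∈ K := hvK
      by_cases hv0 : v = 0
      · rw [hv0, inner_zero_left]; norm_num
      · obtain ⟨ε, hε, hball⟩ := Metric.isOpen_iff.1 hΩo x hx
        have hnv : 0 < ‖v‖ := norm_pos_iff.2 hv0
        set t : ℝ := ε / (2 * ‖v‖) with ht
        have htpos : 0 < t := by positivity
        have hz : x + t • v ∈ Ω := by
          apply hball
          rw [Metric.mem_ball, dist_eq_norm,
            show x + t • v - x = t • v from by abel,
            norm_smul, Real.norm_eq_abs, abs_of_pos htpos, ht,
            div_mul_eq_mul_div, div_lt_iff₀ (by positivity)]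
          nlinarith
        have := hp _ hz
        rw [hA x hx, hA _ hz] at this
        have harg : x + t • v - a = (x - a) + t • v := by abel
        rw [harg] at this
        have hsub : gauge K ((x - a) + t • v) ≤ gauge K (x - a) + t * gauge K v :=
          le_trans (gauge_add_le hKc habs _ _)
            (by rw [gauge_smul_of_nonneg htpos.le, smul_eq_mul])
        have hgv1 : gauge K v ≤ 1 := gauge_le_one_of_mem hvK'
        have hinner : ⟪p, x + t • v - x⟫ = t * ⟪p, v⟫ := by
          rw [show x + t • v - x = t • v by abel, real_inner_smul_right]
        rw [hinner] at this
        have : t * ⟪p, v⟫ ≤ t * 1 := by nlinarith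
        have hle : ⟪p, v⟫ ≤ 1 := le_of_mul_le_mul_left (by linarith) htpos
        rwa [real_inner_comm]
    · intro hp
      refine ⟨a, ha, ?_⟩
      intro z hz
      rw [hA z hz, hua]
      have hkey : ⟪p, z - a⟫ ≤ gauge K (z - a) := by
        by_cases hza : z = a
        · subst hza; rw [sub_self, inner_zero_right, gauge_zero]
        · have hw : z - a ≠ 0 := sub_ne_zero.2 hza
          set r := gauge K (z - a) with hr
          have hrpos : 0 < r := gauge_pos habs hKb |>.2 hw
          have key : ∀ s : ℝ, r < s → ⟪p, z - a⟫ ≤ s := by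
            intro s hs
            have hspos : 0 < s := hrpos.trans hs
            have hmem : s⁻¹ • (z - a) ∈ K := by
              have : gauge K (s⁻¹ • (z - a)) < 1 := by
                rw [gauge_smul_of_nonneg (inv_nonneg.2 hspos.le), smul_eq_mul, ← hr]
                rw [inv_mul_lt_iff₀ hspos, mul_one]
                exact hs
              have hset := gauge_lt_one_eq_self_of_isOpen hKc h0K hKo
              rw [← hset]
              exact this
            have := hp _ hmem
            rw [real_inner_smul_left] at this
            rw [real_inner_comm] at this
            calc ⟪p, z - a⟫ = s * (s⁻¹ * ⟪p, z - a⟫) := by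
                  field_simp
              _ ≤ s * 1 := by
                  apply mul_le_mul_of_nonneg_left this hspos.le
              _ = s := mul_one s
          by_contra hcon
          push_neg at hcon
          have := key ((r + ⟪p, z - a⟫) / 2) (by linarith)
          linarith
      linarith
end

section
/- Fix ε ∈ (0,1) and let E = {s(p′, −1) : p′ ∈ ℝ^{n−1}, 0 ≤ s ≤ (1 + |p′|²/(2(1−ε)))⁻¹} ⊂ ℝⁿ. Then E equals the closed ellipsoid {(q′, q_n) : (2/(1−ε))|q′|² + 4(q_n + 1/2)² ≤ 1}, and hence its Lebesgue measure is (1−ε)^{(n−1)/2} |B(0,1)| / 2^{(n+1)/2}, where |B(0,1)| is the volume of the unit ball in ℝⁿ. -/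
/-! Since `qₙ = -s` and `q' = s p'`, the inequality `(2/(1-ε))|q'|² + 4(qₙ + 1/2)² ≤ 1` is
`4s (s (1 + |p'|²/(2(1-ε))) - 1) ≤ 0`, i.e. the constraint on `s`; conversely a point of the
ellipsoid has `qₙ ≤ 0` and is recovered from `s = -qₙ`, `p' = q'/s`. The ellipsoid is the
preimage of the closed unit ball under `q ↦ D (q - v)` with
`D = diag(√(2/(1-ε)), …, √(2/(1-ε)), 2)` and `v = (0, -1/2)`, so its volume is
`|det D|⁻¹ |B(0,1)|`. -/

open MeasureTheory Metric

theorem le_inv_one_add_div_iff {κ s P : ℝ} (hκ : 0 < κ) (hs : 0 ≤ s) (hP : 0 ≤ P) :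
    s ≤ (1 + P / (2 * κ))⁻¹ ↔ 2 / κ * (s ^ 2 * P) + 4 * (-s + 1 / 2) ^ 2 ≤ 1 := by
  have hpos : 0 < 1 + P / (2 * κ) := by positivity
  rw [← one_div, le_div_iff₀ hpos]
  have expand : 2 / κ * (s ^ 2 * P) + 4 * (-s + 1 / 2) ^ 2 - 1
      = 4 * s * (s * (1 + P / (2 * κ)) - 1) := by
    field_simp
    ring
  rcases hs.eq_or_lt with rfl | hs
  · norm_num
  · constructor <;> intro h <;> nlinarith

theorem exists_smul_iff_ellipsoid {F : Type*} [NormedAddCommGroup F] [NormedSpace ℝ F] {κ : ℝ}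
    (hκ : 0 < κ) (x : F) (t : ℝ) :
    (∃ (p : F) (s : ℝ), 0 ≤ s ∧ s ≤ (1 + ‖p‖ ^ 2 / (2 * κ))⁻¹ ∧ x = s • p ∧ t = -s) ↔
      2 / κ * ‖x‖ ^ 2 + 4 * (t + 1 / 2) ^ 2 ≤ 1 := by
  constructor
  · rintro ⟨p, s, hs, hle, rfl, rfl⟩
    rw [norm_smul, mul_pow, Real.norm_eq_abs, sq_abs]
    exact (le_inv_one_add_div_iff hκ hs (by positivity)).mp hle
  · intro h
    obtain ⟨s, rfl⟩ : ∃ s, t = -s := ⟨-t, by ring⟩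
    have hs : 0 ≤ s := by nlinarith [sq_nonneg ‖x‖, div_pos two_pos hκ]
    have hx : x = s • s⁻¹ • x := by
      rcases hs.eq_or_lt with rfl | hs
      · have hx0 : 2 / κ * ‖x‖ ^ 2 ≤ 0 := by linarith
        have : ‖x‖ ^ 2 ≤ 0 := nonpos_of_mul_nonpos_right hx0 (by positivity)
        rw [zero_smul, ← norm_eq_zero]
        exact pow_eq_zero_iff two_ne_zero |>.mp (le_antisymm this (by positivity))
      · rw [smul_smul, mul_inv_cancel₀ hs.ne', one_smul]
    have hnorm : s ^ 2 * ‖s⁻¹ • x‖ ^ 2 = ‖x‖ ^ 2 := by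
      conv_rhs => rw [hx, norm_smul, mul_pow, Real.norm_eq_abs, sq_abs]
    refine ⟨s⁻¹ • x, s, hs, ?_, hx, rfl⟩
    rwa [le_inv_one_add_div_iff hκ hs (by positivity), hnorm]

theorem addHaar_setOf_norm_linearMap_sub_le {E : Type*} [NormedAddCommGroup E]
    [NormedSpace ℝ E] [MeasurableSpace E] [BorelSpace E] [FiniteDimensional ℝ E]
    (μ : Measure E) [μ.IsAddHaarMeasure] {L : E →ₗ[ℝ] E} (hL : LinearMap.det L ≠ 0) (v : E)
    (r : ℝ) :
    μ {q | ‖L (q - v)‖ ≤ r} = ENNReal.ofReal |LinearMap.det L|⁻¹ * μ (closedBall 0 r) := by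
  have : {q | ‖L (q - v)‖ ≤ r} = (· + -v) ⁻¹' (L ⁻¹' closedBall 0 r) := by
    ext q; simp [sub_eq_add_neg]
  rw [this, measure_preimage_add_right, Measure.addHaar_preimage_linearMap μ hL, abs_inv]

theorem norm_toLpLin_diagonal_sqrt_sq {ι : Type*} [Fintype ι] [DecidableEq ι] {a : ι → ℝ}
    (ha : ∀ i, 0 ≤ a i) (x : EuclideanSpace ℝ ι) :
    ‖Matrix.toLpLin 2 2 (Matrix.diagonal fun i => √(a i)) x‖ ^ 2 = ∑ i, a i * x i ^ 2 := by
  simp [EuclideanSpace.real_norm_sq_eq, Matrix.toLpLin_apply, Matrix.mulVec_diagonal, mul_pow,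
    Real.sq_sqrt (ha _)]

theorem volume_setOf_sum_mul_sub_sq_le_one {ι : Type*} [Fintype ι] [Nonempty ι] {a : ι → ℝ}
    (ha : ∀ i, 0 < a i) (v : EuclideanSpace ℝ ι) :
    volume {q : EuclideanSpace ℝ ι | ∑ i, a i * (q i - v i) ^ 2 ≤ 1}
      = ENNReal.ofReal (∏ i, √(a i))⁻¹ * volume (ball (0 : EuclideanSpace ℝ ι) 1) := by
  classical
  set L := Matrix.toLpLin 2 2 (Matrix.diagonal fun i => √(a i))
  have hdet : LinearMap.det L = ∏ i, √(a i) := by simp [L]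
  have hdet_pos : 0 < ∏ i, √(a i) := Finset.prod_pos fun i _ => Real.sqrt_pos.mpr (ha i)
  have hset : {q : EuclideanSpace ℝ ι | ∑ i, a i * (q i - v i) ^ 2 ≤ 1}
      = {q | ‖L (q - v)‖ ≤ 1} := by
    ext q
    rw [Set.mem_ofPred_eq, Set.mem_ofPred_eq, ← sq_le_one_iff₀ (norm_nonneg _),
      norm_toLpLin_diagonal_sqrt_sq (fun i => (ha i).le)]
    simp
  rw [hset, addHaar_setOf_norm_linearMap_sub_le _ (hdet ▸ hdet_pos.ne'), hdet,
    abs_of_pos hdet_pos, Measure.addHaar_closedBall_eq_addHaar_ball]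

theorem inv_prod_sqrt_snoc {m : ℕ} {κ : ℝ} (hκ : 0 < κ) :
    (∏ i, √((Fin.snoc (fun _ => 2 / κ) 4 : Fin (m + 1) → ℝ) i))⁻¹
      = κ ^ ((m : ℝ) / 2) / 2 ^ (((m : ℝ) + 2) / 2) := by
  rw [Fin.prod_univ_castSucc]
  simp only [Fin.snoc_castSucc, Fin.snoc_last, Finset.prod_const, Finset.card_univ,
    Fintype.card_fin]
  rw [show (4 : ℝ) = 2 ^ 2 by norm_num, Real.sqrt_sq zero_le_two, Real.sqrt_eq_rpow,
    ← Real.rpow_natCast, ← Real.rpow_mul (by positivity), Real.div_rpow zero_le_two hκ.le,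
    show ((m : ℝ) + 2) / 2 = 1 / 2 * m + 1 by ring, Real.rpow_add two_pos, Real.rpow_one,
    show (m : ℝ) / 2 = 1 / 2 * m by ring]
  field_simp

theorem stmt17_general {m : ℕ} (ε : ℝ) (hε1 : ε < 1)
    (E : Set (EuclideanSpace ℝ (Fin (m + 1))))
    (hE : E = {q | ∃ (p' : EuclideanSpace ℝ (Fin m)) (s : ℝ),
      0 ≤ s ∧ s ≤ (1 + ‖p'‖ ^ 2 / (2 * (1 - ε)))⁻¹ ∧
      (∀ i : Fin m, q i.castSucc = s * p' i) ∧ q (Fin.last m) = -s}) :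
    E = {q : EuclideanSpace ℝ (Fin (m + 1)) |
          (2 / (1 - ε)) * (∑ i : Fin m, (q i.castSucc) ^ 2)
            + 4 * (q (Fin.last m) + 1 / 2) ^ 2 ≤ 1} ∧
      volume E = ENNReal.ofReal ((1 - ε) ^ ((m : ℝ) / 2)
          * (volume (Metric.ball (0 : EuclideanSpace ℝ (Fin (m + 1))) 1)).toReal
          / 2 ^ (((m : ℝ) + 2) / 2)) := by
  have hκ : 0 < 1 - ε := by linarith
  have hcone : E = {q : EuclideanSpace ℝ (Fin (m + 1)) |
      (2 / (1 - ε)) * (∑ i : Fin m, (q i.castSucc) ^ 2)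
        + 4 * (q (Fin.last m) + 1 / 2) ^ 2 ≤ 1} := by
    ext q
    let q' : EuclideanSpace ℝ (Fin m) := WithLp.toLp 2 fun i => q i.castSucc
    have hq' : ∑ i : Fin m, q i.castSucc ^ 2 = ‖q'‖ ^ 2 := by
      simp [q', EuclideanSpace.real_norm_sq_eq]
    have hsmul (p' : EuclideanSpace ℝ (Fin m)) (s : ℝ) :
        (∀ i : Fin m, q i.castSucc = s * p' i) ↔ q' = s • p' := by
      simp [q', WithLp.ext_iff, funext_iff]
    simp only [hE, Set.mem_ofPred_eq, hsmul, hq']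
    exact exists_smul_iff_ellipsoid hκ q' _
  let a : Fin (m + 1) → ℝ := Fin.snoc (fun _ => 2 / (1 - ε)) 4
  have ha : ∀ i, 0 < a i := Fin.lastCases (by simp [a]) fun i => by simp [a, hκ]
  let v : EuclideanSpace ℝ (Fin (m + 1)) := WithLp.toLp 2 (Fin.snoc 0 (-(1 / 2)))
  have hellipsoid : E = {q | ∑ i, a i * (q i - v i) ^ 2 ≤ 1} := by
    rw [hcone]
    ext q
    simp [Fin.sum_univ_castSucc, a, v, Finset.mul_sum]
  refine ⟨hcone, ?_⟩
  rw [hellipsoid, volume_setOf_sum_mul_sub_sq_le_one ha, inv_prod_sqrt_snoc hκ,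
    mul_div_right_comm, ENNReal.ofReal_mul (by positivity),
    ENNReal.ofReal_toReal measure_ball_lt_top.ne]

/-- For `ε ∈ (0,1)`, the set
`E = {s(p',-1) : p' ∈ ℝ^{n-1}, 0 ≤ s ≤ (1 + |p'|²/(2(1-ε)))⁻¹} ⊆ ℝⁿ`
(here `n = m+1`) equals the closed ellipsoid
`{(q',qₙ) : (2/(1-ε))|q'|² + 4(qₙ + 1/2)² ≤ 1}`, and its Lebesgue measure is
`(1-ε)^{(n-1)/2} |B(0,1)| / 2^{(n+1)/2}`. -/
theorem stmt17 {m : ℕ} (ε : ℝ) (hε0 : 0 < ε) (hε1 : ε < 1)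
    (E : Set (EuclideanSpace ℝ (Fin (m + 1))))
    (hE : E = {q | ∃ (p' : EuclideanSpace ℝ (Fin m)) (s : ℝ),
      0 ≤ s ∧ s ≤ (1 + ‖p'‖ ^ 2 / (2 * (1 - ε)))⁻¹ ∧
      (∀ i : Fin m, q i.castSucc = s * p' i) ∧ q (Fin.last m) = -s}) :
    E = {q : EuclideanSpace ℝ (Fin (m + 1)) |
          (2 / (1 - ε)) * (∑ i : Fin m, (q i.castSucc) ^ 2)
            + 4 * (q (Fin.last m) + 1 / 2) ^ 2 ≤ 1} ∧
      volume E = ENNReal.ofReal ((1 - ε) ^ ((m : ℝ) / 2)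
          * (volume (Metric.ball (0 : EuclideanSpace ℝ (Fin (m + 1))) 1)).toReal
          / 2 ^ (((m : ℝ) + 2) / 2)) :=
  stmt17_general ε hε1 E hE
end
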